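/- For the optimal discriminator d*(x) = P_X(x)/(P_X(x) + P_G(x)), the GAN objective E_{x∼P_X}[log d*(x)] + E_{x∼P_G}[log(1 - d*(x))] equals 2·JS(P_X ∥ P_G) - 2 log 2, where JS is the Jensen–Shannon divergence. -/

import Mathlib

open MeasureTheory

/-- For the optimal discriminator `d*(x) = P(x)/(P(x)+Q(x))`, the GAN objective
`E_P[log d*] + E_Q[log (1 - d*)]` equals `2 JS(P‖Q) - 2 log 2`, where
`JS(P‖Q) = ½ KL(P‖(P+Q)/2) + ½ KL(Q‖(P+Q)/2)` and `KL(P‖R) = ∫ P log(P/R)`.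
Here `P, Q` are probability densities w.r.t. a base measure `μ`. -/
theorem gan_objective_eq_JS
    {Ω : Type*} [MeasurableSpace Ω] (μ : Measure Ω)
    (P Q : Ω → ℝ)
    (hP : ∀ x, 0 < P x) (hQ : ∀ x, 0 < Q x)
    (hPmeas : Integrable P μ) (hQmeas : Integrable Q μ)
    (hPprob : ∫ x, P x ∂μ = 1) (hQprob : ∫ x, Q x ∂μ = 1)
    (h1 : Integrable (fun x => P x * Real.log (P x / ((P x + Q x) / 2))) μ)
    (h2 : Integrable (fun x => Q x * Real.log (Q x / ((P x + Q x) / 2))) μ) :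
    (∫ x, P x * Real.log (P x / (P x + Q x)) ∂μ)
      + (∫ x, Q x * Real.log (1 - P x / (P x + Q x)) ∂μ)
    = 2 * ((1 / 2) * ∫ x, P x * Real.log (P x / ((P x + Q x) / 2)) ∂μ
            + (1 / 2) * ∫ x, Q x * Real.log (Q x / ((P x + Q x) / 2)) ∂μ)
      - 2 * Real.log 2 := by
  have hPQ : ∀ x, 0 < P x + Q x := fun x => add_pos (hP x) (hQ x)
  have e1 : ∀ x, P x * Real.log (P x / (P x + Q x))
      = P x * Real.log (P x / ((P x + Q x) / 2)) - P x * Real.log 2 := by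
    intro x
    have h : P x / (P x + Q x) = (P x / ((P x + Q x) / 2)) / 2 := by
      field_simp [(hPQ x).ne']
    rw [h, Real.log_div (div_pos (hP x) (half_pos (hPQ x))).ne' (by norm_num), mul_sub]
  have e2 : ∀ x, Q x * Real.log (1 - P x / (P x + Q x))
      = Q x * Real.log (Q x / ((P x + Q x) / 2)) - Q x * Real.log 2 := by
    intro x
    have h : 1 - P x / (P x + Q x) = (Q x / ((P x + Q x) / 2)) / 2 := by
      field_simp [(hPQ x).ne']; ring
    rw [h, Real.log_div (div_pos (hQ x) (half_pos (hPQ x))).ne' (by norm_num), mul_sub]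
  rw [integral_congr_ae (Filter.Eventually.of_forall e1),
      integral_congr_ae (Filter.Eventually.of_forall e2),
      integral_sub h1 (hPmeas.mul_const _),
      integral_sub h2 (hQmeas.mul_const _),
      integral_mul_const, integral_mul_const, hPprob, hQprob]
  ring
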